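/- Let v : Fin n → ℝ² be a closed polygon (indices mod n) with edge vectors e_k = v_{k+1} − v_k, edge midpoints m_k = (v_k + v_{k+1})/2, scaled normals rot(e_k) where rot(x, y) = (y, −x), and shoelace signed area A ≠ 0. If φ : ℝ² → ℝ is affine, φ(x) = c + ⟪g, x⟫, so that its exact face-normal derivative on edge k multiplied by the edge length equals ⟪g, rot(e_k)⟫, then the Modified Green-Gauss reconstruction is exact: for any point p ∈ ℝ², (1/A) ∑_k ⟪g, rot(e_k)⟫ • (m_k − p) = g. -/

import Mathlib

open scoped RealInnerProductSpace BigOperators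

/-- The clockwise quarter-turn `rot (x, y) = (y, -x)` in the plane. -/
noncomputable def rot (w : EuclideanSpace ℝ (Fin 2)) : EuclideanSpace ℝ (Fin 2) :=
  (WithLp.equiv 2 (Fin 2 → ℝ)).symm ![w 1, -(w 0)]

/-! In the plane, `⟪g, rot b⟫ • a - ⟪g, rot a⟫ • b = ⟪a, rot b⟫ • g`. Applied to the endpoints
`a, b` of an edge, it splits the flux-weighted midpoint `⟪g, rot (b - a)⟫ • (a + b) / 2` into the
shoelace term `⟪a, rot b⟫ / 2` times `g` plus the difference of the potential
`a ↦ ⟪g, rot a⟫ • a / 2` between the endpoints. Around a closed polygon these differences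
telescope, leaving `A • g`; the term in `p` vanishes because the edge vectors sum to zero. -/

theorem Fin.sum_comp_add_one_sub {M : Type*} [AddCommGroup M] {n : ℕ} [NeZero n]
    (f : Fin n → M) : ∑ k : Fin n, (f (k + 1) - f k) = 0 := by
  rw [Finset.sum_sub_distrib, sub_eq_zero]
  exact Fintype.sum_equiv (Equiv.addRight 1) _ _ fun _ => rfl

theorem inner_rot (a b : EuclideanSpace ℝ (Fin 2)) : ⟪a, rot b⟫ = a 0 * b 1 - a 1 * b 0 := by
  simp [rot, PiLp.inner_apply, Fin.sum_univ_two]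
  ring

theorem rot_sub (a b : EuclideanSpace ℝ (Fin 2)) : rot (a - b) = rot a - rot b := by
  ext i; fin_cases i <;> simp [rot]; ring

theorem inner_rot_smul_sub_inner_rot_smul (g a b : EuclideanSpace ℝ (Fin 2)) :
    ⟪g, rot b⟫ • a - ⟪g, rot a⟫ • b = ⟪a, rot b⟫ • g := by
  ext i; fin_cases i <;> simp [inner_rot] <;> ring

theorem inner_rot_sub_smul_midpoint (g a b : EuclideanSpace ℝ (Fin 2)) :
    ⟪g, rot (b - a)⟫ • ((2 : ℝ)⁻¹ • (a + b))
      = (2⁻¹ * ⟪a, rot b⟫) • g + (2 : ℝ)⁻¹ • (⟪g, rot b⟫ • b - ⟪g, rot a⟫ • a) := by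
  rw [rot_sub, inner_sub_right]
  linear_combination (norm := module) (2⁻¹ : ℝ) • inner_rot_smul_sub_inner_rot_smul g a b

section Polygon

variable {n : ℕ} [NeZero n] (v : Fin n → EuclideanSpace ℝ (Fin 2)) (g : EuclideanSpace ℝ (Fin 2))

theorem sum_inner_rot_edge_eq_zero : ∑ k : Fin n, ⟪g, rot (v (k + 1) - v k)⟫ = 0 := by
  simp_rw [rot_sub, inner_sub_right]
  exact Fin.sum_comp_add_one_sub fun k => ⟪g, rot (v k)⟫

theorem sum_inner_rot_edge_smul_midpoint :
    ∑ k : Fin n, ⟪g, rot (v (k + 1) - v k)⟫ • ((2 : ℝ)⁻¹ • (v k + v (k + 1)))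
      = (2⁻¹ * ∑ k : Fin n, ⟪v k, rot (v (k + 1))⟫) • g := by
  simp_rw [inner_rot_sub_smul_midpoint, Finset.sum_add_distrib, ← Finset.smul_sum,
    Fin.sum_comp_add_one_sub fun k => ⟪g, rot (v k)⟫ • v k, Finset.mul_sum, Finset.sum_smul]
  rw [smul_zero, add_zero]

end Polygon

theorem mgg_exact_for_affine_general (n : ℕ) [NeZero n]
    (v : Fin n → EuclideanSpace ℝ (Fin 2))
    (A : ℝ)
    (hA : A = (1 / 2 : ℝ) * ∑ k : Fin n,
        (v k 0 * v (k + 1) 1 - v (k + 1) 0 * v k 1))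
    (hA0 : A ≠ 0)
    (g : EuclideanSpace ℝ (Fin 2))
    (p : EuclideanSpace ℝ (Fin 2)) :
    A⁻¹ • ∑ k : Fin n,
        ⟪g, rot (v (k + 1) - v k)⟫ • (((2 : ℝ)⁻¹ • (v k + v (k + 1))) - p)
      = g := by
  have hA' : A = 2⁻¹ * ∑ k : Fin n, ⟪v k, rot (v (k + 1))⟫ := by
    rw [hA, one_div]
    congr 1
    exact Finset.sum_congr rfl fun k _ => by rw [inner_rot]; ring
  simp_rw [smul_sub]
  rw [Finset.sum_sub_distrib, ← Finset.sum_smul, sum_inner_rot_edge_smul_midpoint,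
    sum_inner_rot_edge_eq_zero, zero_smul, sub_zero, ← hA', smul_smul, inv_mul_cancel₀ hA0,
    one_smul]

/-- For a closed polygon `v : Fin n → ℝ²` (indices mod `n`) with edge vectors
`e k = v (k+1) - v k`, edge midpoints `m k = (v k + v (k+1))/2`, scaled outward
normals `rot (e k)` and nonzero shoelace signed area `A`, the Modified Green-Gauss
reconstruction is exact for an affine field with gradient `g` (whose exact
face-normal derivative times edge length on edge `k` is `⟪g, rot (e k)⟫`):
for any point `p`, `(1/A) ∑ k ⟪g, rot (e k)⟫ • (m k - p) = g`. -/
theorem mgg_exact_for_affine (n : ℕ) [NeZero n]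
    (v : Fin n → EuclideanSpace ℝ (Fin 2))
    (A : ℝ)
    (hA : A = (1 / 2 : ℝ) * ∑ k : Fin n,
        (v k 0 * v (k + 1) 1 - v (k + 1) 0 * v k 1))
    (hA0 : A ≠ 0)
    (φ : EuclideanSpace ℝ (Fin 2) → ℝ) (c : ℝ) (g : EuclideanSpace ℝ (Fin 2))
    (hφ : ∀ x, φ x = c + ⟪g, x⟫)
    (p : EuclideanSpace ℝ (Fin 2)) :
    A⁻¹ • ∑ k : Fin n,
        ⟪g, rot (v (k + 1) - v k)⟫ • (((2 : ℝ)⁻¹ • (v k + v (k + 1))) - p)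
      = g :=
  mgg_exact_for_affine_general n v A hA hA0 g p
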